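/- Let m ≥ 1 and δ ∈ {0,1}, and set n := 2m − δ. Then in P the intersection of the ideal J̄ n with the principal ideal ⟨w₁⟩ equals the ideal generated by f̄(2m+1) and w₂^(2−δ)·f̄(2m−1). (The identity J̄_{2m−δ} ∩ ⟨w₁⟩ = ⟨f̄_{2m+1}, w₂^{2−δ} f̄_{2m−1}⟩ established in the proof of Proposition 4.6(iv).) -/

import Mathlib

/- Context: `P = 𝔽₂[w₁,w₂]`, `f̄ 0 = 1`, `f̄ 1 = w₁`,
`f̄ (n+2) = w₁·f̄(n+1) + w₂·f̄ n`, and `J̄ n = ⟨f̄ (n+1), w₂·f̄ n⟩`. -/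

noncomputable section

open MvPolynomial

abbrev P2 : Type := MvPolynomial (Fin 2) (ZMod 2)

def w₁ : P2 := X 0
def w₂ : P2 := X 1

def fbar : ℕ → P2
  | 0 => 1
  | 1 => w₁
  | n + 2 => w₁ * fbar (n + 1) + w₂ * fbar n

def Jbar (n : ℕ) : Ideal P2 := Ideal.span {fbar (n + 1), w₂ * fbar n}

/-! Modulo `w₁` the recurrence gives `f̄ (2k) ≡ w₂ ^ k` and `f̄ (2k+1) ≡ 0`. Hence one generator
of `J̄ n` lies in the prime ideal `⟨w₁⟩` while the other is not divisible by `w₁`, so the intersection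
is generated by the first one and `w₁` times the second; the recurrence
`f̄ (n+1) = w₁ f̄ n + w₂ f̄ (n-1)` turns this pair into the stated generators. -/

namespace Ideal

theorem span_pair_inf_span_singleton_of_prime {R : Type*} [CommRing R] {p x y : R}
    (hp : Prime p) (hx : p ∣ x) (hy : ¬ p ∣ y) :
    span {x, y} ⊓ span {p} = span {x, p * y} := by
  refine le_antisymm (fun z hz ↦ ?_) (span_le.mpr ?_)
  · obtain ⟨⟨a, b, rfl⟩, hpz⟩ := And.imp mem_span_pair.mp mem_span_singleton.mp (mem_inf.mp hz)
    have hpb : p ∣ b := (hp.dvd_or_dvd <| (dvd_add_right (hx.mul_left a)).mp hpz).resolve_right hy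
    obtain ⟨c, rfl⟩ := hpb
    exact mem_span_pair.mpr ⟨a, c, by ring⟩
  · rintro z (rfl | rfl)
    · exact mem_inf.mpr ⟨subset_span (by simp), mem_span_singleton.mpr hx⟩
    · exact mem_inf.mpr ⟨mul_mem_left _ p (subset_span (by simp)),
        mem_span_singleton.mpr (dvd_mul_right p y)⟩

end Ideal

lemma fbar_add_two (n : ℕ) : fbar (n + 2) = w₁ * fbar (n + 1) + w₂ * fbar n := rfl

lemma fbar_add_one {n : ℕ} (hn : n ≠ 0) : fbar (n + 1) = w₁ * fbar n + w₂ * fbar (n - 1) := by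
  obtain ⟨k, rfl⟩ := Nat.exists_eq_succ_of_ne_zero hn
  exact fbar_add_two k

lemma w₁_prime : Prime w₁ := X_prime

lemma not_w₁_dvd_w₂ : ¬ w₁ ∣ w₂ := by
  simp [w₁, w₂]

lemma w₁_dvd_fbar_two_mul_add_one : ∀ k, w₁ ∣ fbar (2 * k + 1)
  | 0 => dvd_rfl
  | k + 1 => by
    rw [show 2 * (k + 1) + 1 = 2 * k + 1 + 2 by ring, fbar_add_two]
    exact dvd_add (dvd_mul_right _ _) ((w₁_dvd_fbar_two_mul_add_one k).mul_left _)

lemma w₁_dvd_fbar_two_mul_sub_pow : ∀ k, w₁ ∣ fbar (2 * k) - w₂ ^ k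
  | 0 => by simp [fbar]
  | k + 1 => by
    obtain ⟨c, hc⟩ := w₁_dvd_fbar_two_mul_sub_pow k
    refine ⟨fbar (2 * k + 1) + w₂ * c, ?_⟩
    rw [show 2 * (k + 1) = 2 * k + 2 by ring, fbar_add_two]
    linear_combination w₂ * hc

lemma w₁_dvd_fbar_of_odd {n : ℕ} (hn : Odd n) : w₁ ∣ fbar n := by
  obtain ⟨k, rfl⟩ := hn
  exact w₁_dvd_fbar_two_mul_add_one k

lemma not_w₁_dvd_fbar_of_even {n : ℕ} (hn : Even n) : ¬ w₁ ∣ fbar n := by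
  obtain ⟨k, rfl⟩ := hn
  rw [← two_mul]
  exact fun h ↦ not_w₁_dvd_w₂ <| w₁_prime.dvd_of_dvd_pow <|
    (dvd_sub_right h).mp (w₁_dvd_fbar_two_mul_sub_pow k)

lemma Jbar_inf_span_w₁_of_even {n : ℕ} (hn : Even n) (hn₀ : n ≠ 0) :
    Jbar n ⊓ Ideal.span {w₁} = Ideal.span {fbar (n + 1), w₂ ^ 2 * fbar (n - 1)} := by
  have hy : ¬ w₁ ∣ w₂ * fbar n := fun h ↦
    (w₁_prime.dvd_or_dvd h).elim not_w₁_dvd_w₂ (not_w₁_dvd_fbar_of_even hn)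
  rw [Jbar, Ideal.span_pair_inf_span_singleton_of_prime w₁_prime
    (w₁_dvd_fbar_of_odd hn.add_one) hy]
  have : w₁ * (w₂ * fbar n) = -(w₂ ^ 2 * fbar (n - 1)) + fbar (n + 1) * w₂ := by
    rw [fbar_add_one hn₀]; ring
  rw [this, Ideal.span_pair_add_left_mul, Ideal.span_pair_neg]

lemma Jbar_inf_span_w₁_of_odd {n : ℕ} (hn : Odd n) :
    Jbar n ⊓ Ideal.span {w₁} = Ideal.span {fbar (n + 2), w₂ * fbar n} := by
  rw [Jbar, Ideal.span_pair_comm, Ideal.span_pair_inf_span_singleton_of_prime w₁_prime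
    ((w₁_dvd_fbar_of_odd hn).mul_left w₂) (not_w₁_dvd_fbar_of_even hn.add_one),
    fbar_add_two, Ideal.span_pair_add_right, Ideal.span_pair_comm]

theorem Jbar_inter_w1 (m δ : ℕ) (hm : 1 ≤ m) (hδ : δ = 0 ∨ δ = 1) :
    Jbar (2 * m - δ) ⊓ Ideal.span {w₁} =
      Ideal.span {fbar (2 * m + 1), w₂ ^ (2 - δ) * fbar (2 * m - 1)} := by
  rcases hδ with rfl | rfl
  · exact Jbar_inf_span_w₁_of_even (even_two_mul m) (by omega)
  · have hodd : Odd (2 * m - 1) := ⟨m - 1, by omega⟩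
    rw [Jbar_inf_span_w₁_of_odd hodd, show 2 * m - 1 + 2 = 2 * m + 1 by omega, pow_one]

end
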